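/- For every natural number r ≥ 0, the Fibonacci product polynomial Q_r divides Q_{2r+1} in ℤ[x], and P_r divides Q_{2r} in ℤ[x]. -/

import Mathlib

open Polynomial

/-- Fibonacci product polynomials `P`. -/
noncomputable def fibP : ℕ → Polynomial ℤ
  | 0 => 1
  | 1 => X - 2
  | n + 2 => (X - 3) * fibP (n + 1) - fibP n

/-- Fibonacci product polynomials `Q`. -/
noncomputable def fibQ : ℕ → Polynomial ℤ
  | 0 => 1
  | 1 => X - 3
  | n + 2 => (X - 3) * fibQ (n + 1) - fibQ n

/-!
Both families solve the recurrence `f (n + 2) = a * f (n + 1) - f n` with `a = X - 3`, and `Q`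
is its solution with `Q 0 = 1`, `Q 1 = a`. For such a recurrence the addition formula
`f (m + n + 2) = f (m + 1) * Q (n + 1) - f m * Q n` holds, since both sides solve the recurrence
in `n`. Taking `f = Q` gives `Q (2r + 1) = Q r * (Q (r + 1) - Q (r - 1))` and
`Q (2r) = Q r ^ 2 - Q (r - 1) ^ 2 = (Q r - Q (r - 1)) * P r`, because `P r = Q r + Q (r - 1)`.
-/

section Recurrence

variable {R : Type*} [CommRing R] {a : R} {f g Q : ℕ → R}

theorem eq_of_recurrence_of_eq_of_eq (hf : ∀ n, f (n + 2) = a * f (n + 1) - f n)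
    (hg : ∀ n, g (n + 2) = a * g (n + 1) - g n) (h0 : f 0 = g 0) (h1 : f 1 = g 1) : f = g := by
  funext n
  induction n using Nat.twoStepInduction with
  | zero => exact h0
  | one => exact h1
  | more k ihk ihk1 => rw [hf, hg, ihk, ihk1]

theorem recurrence_add (hf : ∀ n, f (n + 2) = a * f (n + 1) - f n)
    (hQ : ∀ n, Q (n + 2) = a * Q (n + 1) - Q n) (hQ0 : Q 0 = 1) (hQ1 : Q 1 = a) (m n : ℕ) :
    f (m + n + 2) = f (m + 1) * Q (n + 1) - f m * Q n := by
  induction n using Nat.twoStepInduction with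
  | zero => rw [hf, hQ0, hQ1]; ring
  | one => rw [hf (m + 1), hf m, hQ 0, hQ0, hQ1]; ring
  | more k ihk ihk1 =>
    rw [show m + (k + 2) + 2 = m + k + 2 + 2 by omega, hf, hQ (k + 1), hQ k,
      show m + k + 2 + 1 = m + (k + 1) + 2 by omega, ihk, ihk1, hQ k]
    ring

end Recurrence

theorem fibQ_add_two (n : ℕ) : fibQ (n + 2) = (X - 3) * fibQ (n + 1) - fibQ n := rfl

theorem fibP_add_two (n : ℕ) : fibP (n + 2) = (X - 3) * fibP (n + 1) - fibP n := rfl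

theorem fibQ_add (m n : ℕ) :
    fibQ (m + n + 2) = fibQ (m + 1) * fibQ (n + 1) - fibQ m * fibQ n :=
  recurrence_add fibQ_add_two fibQ_add_two rfl rfl m n

theorem fibP_succ (n : ℕ) : fibP (n + 1) = fibQ (n + 1) + fibQ n := by
  have h := eq_of_recurrence_of_eq_of_eq (f := fun n ↦ fibP (n + 1))
    (g := fun n ↦ fibQ (n + 1) + fibQ n) (fun n ↦ fibP_add_two (n + 1))
    (fun n ↦ by simp only [fibQ_add_two]; ring)
    (by simp only [fibP, fibQ]; ring) (by simp only [fibP, fibQ]; ring)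
  exact congrFun h n

theorem stmt10 (r : ℕ) :
    fibQ r ∣ fibQ (2 * r + 1) ∧ fibP r ∣ fibQ (2 * r) := by
  cases r with
  | zero => simp [fibQ, fibP]
  | succ k =>
    constructor
    · rw [show 2 * (k + 1) + 1 = (k + 1) + k + 2 by omega, fibQ_add]
      exact ⟨fibQ (k + 2) - fibQ k, by ring⟩
    · rw [show 2 * (k + 1) = k + k + 2 by omega, fibQ_add, fibP_succ]
      exact ⟨fibQ (k + 1) - fibQ k, by ring⟩
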